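/- arXiv:1509.05355 — 5 statements merged into one kernel-verified Lean document; each statement's English description precedes it below -/
import Mathlib

section
/- Let Φ(ξ,η) = ξ₁/|ξ|² − (ξ₁−η₁)/|ξ−η|² − η₁/|η|² for ξ, η ∈ ℝ² with ξ, η, ξ−η nonzero. Then the magnitude of the gradient of Φ in η satisfies |∇_η Φ(ξ,η)| = |ξ−2η|·|ξ| / (|ξ−η|²·|η|²). -/
/-- The β-plane phase function Φ(ξ,η) = ξ₁/|ξ|² − (ξ₁−η₁)/|ξ−η|² − η₁/|η|². -/
noncomputable def Phi (ξ η : EuclideanSpace ℝ (Fin 2)) : ℝ :=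
  ξ 0 / ‖ξ‖ ^ 2 - (ξ 0 - η 0) / ‖ξ - η‖ ^ 2 - η 0 / ‖η‖ ^ 2

/-!
Identify ℝ² with ℂ. Since `x₁ / |x|² = Re (1/x)`, the map `η ↦ Φ(ξ,η)` is the real part of the
holomorphic function `z ↦ 1/ξ − 1/(ξ − z) − 1/z`, and the gradient of the real part of a
holomorphic function is the conjugate of its complex derivative. Hence
`|∇_η Φ(ξ,η)| = |1/η² − 1/(ξ − η)²| = |ξ (ξ − 2η)| / (|ξ − η|² |η|²)`.
-/

open Complex ComplexConjugate

theorem HasDerivAt.hasGradientAt_re {f : ℂ → ℂ} {f' z : ℂ} (hf : HasDerivAt f f' z) :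
    HasGradientAt (fun w => (f w).re) (conj f') z := by
  rw [hasGradientAt_iff_hasFDerivAt]
  refine (reCLM.hasFDerivAt.comp z (hf.hasFDerivAt.restrictScalars ℝ)).congr_fderiv ?_
  ext v
  simp [Complex.inner, mul_comm]

theorem HasGradientAt.comp_linearIsometryEquiv {E F : Type*} [NormedAddCommGroup E]
    [InnerProductSpace ℝ E] [CompleteSpace E] [NormedAddCommGroup F] [InnerProductSpace ℝ F]
    [CompleteSpace F] {f : F → ℝ} {f' : F} (L : E ≃ₗᵢ[ℝ] F) {x : E}
    (hf : HasGradientAt f f' (L x)) : HasGradientAt (f ∘ L) (L.symm f') x := by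
  rw [hasGradientAt_iff_hasFDerivAt] at hf ⊢
  refine (hf.comp x L.toContinuousLinearEquiv.hasFDerivAt).congr_fderiv ?_
  ext v
  simp [← L.inner_map_map (L.symm f')]

namespace Complex

theorem re_inv_eq_div_norm_sq (z : ℂ) : (z⁻¹).re = z.re / ‖z‖ ^ 2 := by
  rw [inv_re, normSq_eq_norm_sq]

theorem hasDerivAt_inv_sub_inv_sub_inv {w z : ℂ} (hz : z ≠ 0) (hwz : w - z ≠ 0) :
    HasDerivAt (fun u => w⁻¹ - (w - u)⁻¹ - u⁻¹) (z⁻¹ ^ 2 - (w - z)⁻¹ ^ 2) z := by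
  have h_sub := ((hasDerivAt_id z).const_sub w).inv hwz
  exact (((hasDerivAt_const z w⁻¹).sub h_sub).sub (hasDerivAt_inv hz)).congr_deriv
    (by simp only [id, inv_pow]; ring)

theorem norm_inv_sq_sub_inv_sq {z w : ℂ} (hz : z ≠ 0) (hwz : w - z ≠ 0) :
    ‖z⁻¹ ^ 2 - (w - z)⁻¹ ^ 2‖ = ‖w - 2 * z‖ * ‖w‖ / (‖w - z‖ ^ 2 * ‖z‖ ^ 2) := by
  have h_factor : z⁻¹ ^ 2 - (w - z)⁻¹ ^ 2 = (w - 2 * z) * w / ((w - z) ^ 2 * z ^ 2) := by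
    field_simp
    ring
  rw [h_factor, norm_div, norm_mul, norm_mul, norm_pow, norm_pow]

end Complex

noncomputable def EuclideanSpace.toComplex : EuclideanSpace ℝ (Fin 2) ≃ₗᵢ[ℝ] ℂ :=
  orthonormalBasisOneI.repr.symm

theorem EuclideanSpace.re_toComplex (x : EuclideanSpace ℝ (Fin 2)) : (toComplex x).re = x 0 := by
  simp [toComplex]

theorem Phi_eq_re_comp_toComplex (ξ : EuclideanSpace ℝ (Fin 2)) :
    Phi ξ = (fun z : ℂ =>
      ((EuclideanSpace.toComplex ξ)⁻¹ - (EuclideanSpace.toComplex ξ - z)⁻¹ - z⁻¹).re) ∘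
        EuclideanSpace.toComplex := by
  ext η
  simp only [Phi, Function.comp_apply, ← map_sub, sub_re, re_inv_eq_div_norm_sq,
    LinearIsometryEquiv.norm_map, EuclideanSpace.re_toComplex]

theorem norm_gradient_eta_Phi_general (ξ η : EuclideanSpace ℝ (Fin 2))
    (hη : η ≠ 0) (hξη : ξ ≠ η) :
    ‖gradient (fun η' => Phi ξ η') η‖ =
      ‖ξ - (2 : ℝ) • η‖ * ‖ξ‖ / (‖ξ - η‖ ^ 2 * ‖η‖ ^ 2) := by
  set L := EuclideanSpace.toComplex
  have hz : L η ≠ 0 := by simpa using hη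
  have hwz : L ξ - L η ≠ 0 := by simpa [← map_sub, sub_eq_zero] using hξη
  have hL : L (ξ - (2 : ℝ) • η) = L ξ - 2 * L η := by
    rw [map_sub, map_smul, real_smul, ofReal_ofNat]
  rw [show (fun η' => Phi ξ η') = _ from Phi_eq_re_comp_toComplex ξ,
    ((hasDerivAt_inv_sub_inv_sub_inv hz hwz).hasGradientAt_re.comp_linearIsometryEquiv L).gradient,
    L.symm.norm_map, norm_conj, norm_inv_sq_sub_inv_sq hz hwz, ← hL, ← map_sub]
  simp only [LinearIsometryEquiv.norm_map]

/-- |∇_η Φ(ξ,η)| = |ξ−2η|·|ξ| / (|ξ−η|²·|η|²). -/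
theorem norm_gradient_eta_Phi (ξ η : EuclideanSpace ℝ (Fin 2))
    (hξ : ξ ≠ 0) (hη : η ≠ 0) (hξη : ξ ≠ η) :
    ‖gradient (fun η' => Phi ξ η') η‖ =
      ‖ξ - (2 : ℝ) • η‖ * ‖ξ‖ / (‖ξ - η‖ ^ 2 * ‖η‖ ^ 2) :=
  norm_gradient_eta_Phi_general ξ η hη hξη
end

section
/- Let Φ(ξ,η) = ξ₁/|ξ|² − (ξ₁−η₁)/|ξ−η|² − η₁/|η|². Suppose η ≠ 0 and |ξ−2η| ≤ |η|/1000. Then |Φ(ξ,η)| ≥ ((6/10)|ξ₁| − (2/1000)|η₁|)/|η|². -/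
lemma one_div_sq_bounds_of_abs_sub_le {b c r : ℝ} (hc : 0 < c) (hr : r < 1)
    (hb : |b - c| ≤ r * c) :
    1 / (1 + r) ^ 2 / c ^ 2 ≤ 1 / b ^ 2 ∧ 1 / b ^ 2 ≤ 1 / (1 - r) ^ 2 / c ^ 2 := by
  obtain ⟨hlo, hhi⟩ := abs_le.mp hb
  have hc_lo : 0 < (1 - r) * c := mul_pos (by linarith) hc
  have hb0 : 0 < b := by linarith
  rw [div_div, div_div, ← mul_pow, ← mul_pow]
  exact ⟨one_div_le_one_div_of_le (by positivity) (pow_le_pow_left₀ hb0.le (by linarith) 2),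
    one_div_le_one_div_of_le (by positivity) (pow_le_pow_left₀ hc_lo.le (by linarith) 2)⟩

section

variable {E : Type*} [NormedAddCommGroup E] [NormedSpace ℝ E] {ξ η : E} {δ : ℝ}

lemma abs_norm_sub_two_smul_le (h : ‖ξ - (2 : ℝ) • η‖ ≤ δ) : |‖ξ‖ - 2 * ‖η‖| ≤ δ := by
  have := abs_norm_sub_norm_le ξ ((2 : ℝ) • η)
  rw [norm_smul, Real.norm_two] at this
  linarith

lemma abs_norm_sub_sub_norm_le (h : ‖ξ - (2 : ℝ) • η‖ ≤ δ) : |‖ξ - η‖ - ‖η‖| ≤ δ := by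
  have := abs_norm_sub_norm_le (ξ - η) η
  rw [sub_sub, ← two_smul ℝ η] at this
  exact this.trans h

end

lemma one_div_sq_sub_one_div_sq_ge {a b c : ℝ} (hc : 0 < c) (ha : |a - 2 * c| ≤ c / 1000)
    (hb : |b - c| ≤ c / 1000) : (74 / 100) / c ^ 2 ≤ 1 / b ^ 2 - 1 / a ^ 2 := by
  have hb' := (one_div_sq_bounds_of_abs_sub_le (b := b) (r := 1 / 1000) hc (by norm_num)
    (by linarith)).1
  have ha' := (one_div_sq_bounds_of_abs_sub_le (b := a) (r := 1 / 2000) (c := 2 * c) (by positivity)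
    (by norm_num) (by linarith)).2
  rw [mul_pow] at ha'
  have hc2 : 0 < c ^ 2 := by positivity
  have : (74 / 100) / c ^ 2
      ≤ 1 / (1 + 1 / 1000) ^ 2 / c ^ 2 - 1 / (1 - 1 / 2000) ^ 2 / (2 ^ 2 * c ^ 2) := by
    rw [← div_div, ← sub_div]
    gcongr
    norm_num
  linarith

lemma abs_one_div_sq_sub_one_div_sq_le {b c : ℝ} (hc : 0 < c) (hb : |b - c| ≤ c / 1000) :
    |1 / b ^ 2 - 1 / c ^ 2| ≤ (201 / 100000) / c ^ 2 := by
  obtain ⟨hlo, hhi⟩ := one_div_sq_bounds_of_abs_sub_le (b := b) (r := 1 / 1000) hc (by norm_num)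
    (by linarith)
  have hc2 : 0 < c ^ 2 := by positivity
  rw [abs_le]
  constructor
  · have : -(201 / 100000) / c ^ 2 ≤ 1 / (1 + 1 / 1000) ^ 2 / c ^ 2 - 1 / c ^ 2 := by
      rw [← sub_div]
      gcongr
      norm_num
    rw [neg_div] at this
    linarith
  · have : 1 / (1 - 1 / 1000) ^ 2 / c ^ 2 - 1 / c ^ 2 ≤ (201 / 100000) / c ^ 2 := by
      rw [← sub_div]
      gcongr
      norm_num
    linarith

lemma le_abs_div_sq_sub_div_sq_sub_div_sq {a b c x y : ℝ} (hc : 0 < c)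
    (ha : |a - 2 * c| ≤ c / 1000) (hb : |b - c| ≤ c / 1000) :
    ((6 / 10) * |x| - (2 / 1000) * |y|) / c ^ 2 ≤ |x / a ^ 2 - (x - y) / b ^ 2 - y / c ^ 2| := by
  have hA := one_div_sq_sub_one_div_sq_ge hc ha hb
  have hB := abs_one_div_sq_sub_one_div_sq_le hc hb
  have hc2 : 0 < c ^ 2 := by positivity
  have hΦ : ((74 / 100) * |x| - (201 / 100000) * |y|) / c ^ 2
      ≤ |x / a ^ 2 - (x - y) / b ^ 2 - y / c ^ 2| :=
    calc ((74 / 100) * |x| - (201 / 100000) * |y|) / c ^ 2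
        = |x| * ((74 / 100) / c ^ 2) - |y| * ((201 / 100000) / c ^ 2) := by ring
      _ ≤ |x| * |1 / a ^ 2 - 1 / b ^ 2| - |y| * |1 / b ^ 2 - 1 / c ^ 2| := by
        rw [abs_sub_comm, abs_of_nonneg ((by positivity : (0 : ℝ) ≤ 74 / 100 / c ^ 2).trans hA)]
        gcongr
      _ = |x * (1 / a ^ 2 - 1 / b ^ 2)| - |y * (1 / b ^ 2 - 1 / c ^ 2)| := by
        rw [abs_mul, abs_mul]
      _ ≤ |x * (1 / a ^ 2 - 1 / b ^ 2) + y * (1 / b ^ 2 - 1 / c ^ 2)| :=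
        abs_sub_abs_le_abs_add _ _
      _ = |x / a ^ 2 - (x - y) / b ^ 2 - y / c ^ 2| := by ring_nf
  -- 201/100000 exceeds 2/1000, but when the claimed bound is positive, |y| < 300|x| and the
  -- slack between 74/100 and 6/10 absorbs the difference.
  rcases le_or_gt ((6 / 10) * |x|) ((2 / 1000) * |y|) with hsmall | hlarge
  · exact (div_nonpos_of_nonpos_of_nonneg (by linarith) hc2.le).trans (abs_nonneg _)
  · refine le_trans ?_ hΦ
    gcongr ?_ / _
    linarith [abs_nonneg x]

/-- If η ≠ 0 and |ξ−2η| ≤ |η|/1000, then |Φ(ξ,η)| ≥ ((6/10)|ξ₁| − (2/1000)|η₁|)/|η|². -/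
theorem Phi_lower_bound (ξ η : EuclideanSpace ℝ (Fin 2)) (hη : η ≠ 0)
    (h : ‖ξ - (2 : ℝ) • η‖ ≤ ‖η‖ / 1000) :
    ((6 / 10) * |ξ 0| - (2 / 1000) * |η 0|) / ‖η‖ ^ 2 ≤ |Phi ξ η| :=
  le_abs_div_sq_sub_div_sq_sub_div_sq (norm_pos_iff.mpr hη) (abs_norm_sub_two_smul_le h)
    (abs_norm_sub_sub_norm_le h)
end

section
/- Let Φ(ξ,η) = ξ₁/|ξ|² − (ξ₁−η₁)/|ξ−η|² − η₁/|η|². Suppose η ≠ 0, |ξ−2η| ≤ |η|/1000, and |ξ₁| ≥ |η₁|/100. Then |Φ(ξ,η)| ≥ |ξ₁|/(2|η|²). -/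
lemma abs_div_sq_sub_one_le {a s ε : ℝ} (ha : 0 < a) (hε : ε < 1) (h : |s - a| ≤ ε * a) :
    |(a / s) ^ 2 - 1| ≤ ε * (2 + ε) / (1 - ε) ^ 2 := by
  obtain ⟨hs_lo, hs_hi⟩ := abs_le.mp h
  have hε₀ : 0 ≤ ε := nonneg_of_mul_nonneg_left ((abs_nonneg _).trans h) ha
  have hs : (1 - ε) * a ≤ s := by linarith
  have hs₀ : 0 < s := lt_of_lt_of_le (by nlinarith) hs
  calc |(a / s) ^ 2 - 1| = |s - a| * (a + s) / s ^ 2 := by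
        rw [show (a / s) ^ 2 - 1 = (a - s) * (a + s) / s ^ 2 by field_simp; ring, abs_div,
          abs_mul, abs_sub_comm, abs_of_pos (by positivity : 0 < a + s),
          abs_of_pos (by positivity : 0 < s ^ 2)]
    _ ≤ (ε * a) * ((2 + ε) * a) / ((1 - ε) * a) ^ 2 := by
        gcongr
        linarith
    _ = ε * (2 + ε) / (1 - ε) ^ 2 := by
        field_simp

lemma half_le_abs_phase {x y r s t : ℝ} (hr : 0 < r) (hs : |s - 2 * r| ≤ r / 1000)
    (ht : |t - r| ≤ r / 1000) (hxy : |y| ≤ 100 * |x|) :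
    |x| / (2 * r ^ 2) ≤ |x / s ^ 2 - (x - y) / t ^ 2 - y / r ^ 2| := by
  set P := x / s ^ 2 - (x - y) / t ^ 2 - y / r ^ 2
  set U := (2 * r / s) ^ 2 - 1
  set V := (r / t) ^ 2 - 1
  have hU : |U| ≤ 1 / 500 :=
    (abs_div_sq_sub_one_le (by positivity) (by norm_num : (1 / 2000 : ℝ) < 1)
      (by linarith)).trans (by norm_num)
  have hV : |V| ≤ 1 / 450 :=
    (abs_div_sq_sub_one_le hr (by norm_num : (1 / 1000 : ℝ) < 1)
      (by linarith)).trans (by norm_num)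
  have hs₀ : s ≠ 0 := by linarith [(abs_le.mp hs).1]
  have ht₀ : t ≠ 0 := by linarith [(abs_le.mp ht).1]
  -- `U`, `V` are the relative errors in `s² ≈ 4r²`, `t² ≈ r²`; without them `r² P` is `-(3/4) x`.
  have hdecomp : r ^ 2 * P = -(3 / 4 * x) + x * U / 4 - (x - y) * V := by
    simp only [P, U, V]
    field_simp
    ring
  have hxU : |x * U / 4| ≤ |x| / 2000 := by
    rw [abs_div, abs_mul, abs_of_pos (by norm_num : (0 : ℝ) < 4)]
    nlinarith [abs_nonneg x]
  have hxV : |(x - y) * V| ≤ 101 * |x| / 450 := by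
    rw [abs_mul]
    nlinarith [abs_sub x y, abs_nonneg V, abs_nonneg (x - y)]
  have hlead : 3 / 4 * |x| ≤ |r ^ 2 * P| + |x * U / 4| + |(x - y) * V| := by
    calc 3 / 4 * |x| = |-(r ^ 2 * P) + x * U / 4 - (x - y) * V| := by
          rw [hdecomp, ← abs_of_pos (by norm_num : (0 : ℝ) < 3 / 4), ← abs_mul]
          ring_nf
      _ ≤ |-(r ^ 2 * P) + x * U / 4| + |(x - y) * V| := abs_sub _ _
      _ ≤ |-(r ^ 2 * P)| + |x * U / 4| + |(x - y) * V| := by gcongr; exact abs_add_le _ _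
      _ = _ := by rw [abs_neg]
  rw [abs_mul, abs_of_pos (by positivity : 0 < r ^ 2)] at hlead
  rw [div_le_iff₀ (by positivity)]
  linarith [abs_nonneg x]

/-- If η ≠ 0, |ξ−2η| ≤ |η|/1000 and |ξ₁| ≥ |η₁|/100, then |Φ(ξ,η)| ≥ |ξ₁|/(2|η|²). -/
theorem Phi_lower_bound' (ξ η : EuclideanSpace ℝ (Fin 2)) (hη : η ≠ 0)
    (h : ‖ξ - (2 : ℝ) • η‖ ≤ ‖η‖ / 1000) (h1 : |η 0| / 100 ≤ |ξ 0|) :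
    |ξ 0| / (2 * ‖η‖ ^ 2) ≤ |Phi ξ η| := by
  have hξ : |‖ξ‖ - 2 * ‖η‖| ≤ ‖η‖ / 1000 := by
    have := abs_norm_sub_norm_le ξ ((2 : ℝ) • η)
    rw [norm_smul, Real.norm_two] at this
    exact this.trans h
  have hξη : |‖ξ - η‖ - ‖η‖| ≤ ‖η‖ / 1000 := by
    have := abs_norm_sub_norm_le (ξ - η) η
    rw [sub_sub, ← two_smul ℝ η] at this
    exact this.trans h
  exact half_le_abs_phase (norm_pos_iff.mpr hη) hξ hξη (by linarith)
end

section
/- Suppose ξ, η ∈ ℝ² with η ≠ 0 satisfy |ξ−2η| ≤ |η|/1000 and |ξ₁| < |η₁|/100. Then |ξ·η^⊥| = |ξ₂η₁ − ξ₁η₂| satisfies (1/2)|η₁||η| ≤ |ξ·η^⊥| ≤ 4|η₁||η|. -/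
/-! Since ξ is close to 2η while |ξ₁| is tiny compared with |η₁|, the relation ξ₁ ≈ 2η₁ forces
|η₁| < |η|/1990, so η is almost vertical: |η₂| ≥ 0.99 |η| and |ξ₂| ≈ 2|η₂| ≈ 2|η|. In
ξ₂η₁ − ξ₁η₂ the first term therefore has size about 2|η₁||η|, and the second is at most
|η₁||η|/100. -/

theorem abs_lt_of_abs_sub_two_mul_le {a p ε : ℝ} (ha : |a - 2 * p| ≤ ε) (h1 : |a| < |p| / 100) :
    |p| < 100 / 199 * ε := by
  have : 2 * |p| - |a| ≤ |a - 2 * p| := by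
    simpa [abs_sub_comm, abs_mul] using abs_sub_abs_le_abs_sub (2 * p) a
  linarith

theorem abs_mul_sub_mul_bounds_of_near_double {a b p q N : ℝ} (hN : p ^ 2 + q ^ 2 = N ^ 2)
    (hN0 : 0 ≤ N) (ha : |a - 2 * p| ≤ N / 1000) (hb : |b - 2 * q| ≤ N / 1000)
    (h1 : |a| < |p| / 100) :
    1 / 2 * |p| * N ≤ |b * p - a * q| ∧ |b * p - a * q| ≤ 4 * |p| * N := by
  have hp : |p| < N / 1990 := by linarith [abs_lt_of_abs_sub_two_mul_le ha h1]
  have hq_le : |q| ≤ N := abs_le_of_sq_le_sq (by nlinarith) hN0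
  have hq_ge : 99 / 100 * N ≤ |q| := by
    rw [← sq_le_sq₀ (by positivity) (abs_nonneg q), sq_abs]
    nlinarith [sq_abs p, abs_nonneg p]
  have hb_ge : 2 * |q| - N / 1000 ≤ |b| := by
    have := abs_sub_abs_le_abs_sub (2 * q) b
    rw [abs_sub_comm, abs_mul, abs_two] at this
    linarith
  have hb_le : |b| ≤ 2 * |q| + N / 1000 := by
    have := abs_sub_abs_le_abs_sub b (2 * q)
    rw [abs_mul, abs_two] at this
    linarith
  have haq : |a| * |q| ≤ |p| / 100 * N :=
    mul_le_mul h1.le hq_le (abs_nonneg q) (by positivity)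
  have hp0 := abs_nonneg p
  constructor
  · calc 1 / 2 * |p| * N ≤ |b| * |p| - |a| * |q| := by
          linarith [mul_le_mul_of_nonneg_right hb_ge hp0, mul_le_mul_of_nonneg_right hq_ge hp0,
            mul_nonneg hN0 hp0]
      _ ≤ |b * p - a * q| := by simpa [abs_mul] using abs_sub_abs_le_abs_sub (b * p) (a * q)
  · calc |b * p - a * q| ≤ |b| * |p| + |a| * |q| := by simpa [abs_mul] using abs_sub (b * p) (a * q)
      _ ≤ 4 * |p| * N := by
          linarith [mul_le_mul_of_nonneg_right hb_le hp0, mul_le_mul_of_nonneg_right hq_le hp0,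
            mul_nonneg hN0 hp0]

theorem EuclideanSpace.norm_sq_eq_fin_two (x : EuclideanSpace ℝ (Fin 2)) :
    ‖x‖ ^ 2 = x 0 ^ 2 + x 1 ^ 2 := by
  simp [EuclideanSpace.real_norm_sq_eq, Fin.sum_univ_two]

theorem nullForm_numerator_bounds_general (ξ η : EuclideanSpace ℝ (Fin 2))
    (h : ‖ξ - (2 : ℝ) • η‖ ≤ ‖η‖ / 1000) (h1 : |ξ 0| < |η 0| / 100) :
    (1 / 2) * |η 0| * ‖η‖ ≤ |ξ 1 * η 0 - ξ 0 * η 1| ∧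
      |ξ 1 * η 0 - ξ 0 * η 1| ≤ 4 * |η 0| * ‖η‖ := by
  have hcoord (i : Fin 2) : |ξ i - 2 * η i| ≤ ‖η‖ / 1000 := by
    simpa using (PiLp.norm_apply_le (ξ - (2 : ℝ) • η) i).trans h
  exact abs_mul_sub_mul_bounds_of_near_double (EuclideanSpace.norm_sq_eq_fin_two η).symm
    (norm_nonneg η) (hcoord 0) (hcoord 1) h1

/-- If η ≠ 0, |ξ−2η| ≤ |η|/1000 and |ξ₁| < |η₁|/100, then
(1/2)|η₁||η| ≤ |ξ·η^⊥| = |ξ₂η₁ − ξ₁η₂| ≤ 4|η₁||η|. -/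
theorem nullForm_numerator_bounds (ξ η : EuclideanSpace ℝ (Fin 2)) (hη : η ≠ 0)
    (h : ‖ξ - (2 : ℝ) • η‖ ≤ ‖η‖ / 1000) (h1 : |ξ 0| < |η 0| / 100) :
    (1 / 2) * |η 0| * ‖η‖ ≤ |ξ 1 * η 0 - ξ 0 * η 1| ∧
      |ξ 1 * η 0 - ξ 0 * η 1| ≤ 4 * |η 0| * ‖η‖ :=
  nullForm_numerator_bounds_general ξ η h h1
end

section
/- Let Φ(ξ,η) = ξ₁/|ξ|² − (ξ₁−η₁)/|ξ−η|² − η₁/|η|². Suppose ξ, η ∈ ℝ² with η ≠ 0 satisfy |ξ−2η| ≤ |η|/1000 and |ξ₁| < |η₁|/100. Then the partial derivative in the second coordinate of η satisfies |∂_{η₂}Φ(ξ,η)| ≥ |η₁|·|η| / (4|ξ−η|⁴). -/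
theorem hasFDerivAt_apply_div_norm_sq {E : Type*} [NormedAddCommGroup E] [InnerProductSpace ℝ E]
    (ℓ : E →L[ℝ] ℝ) {v : E} (hv : v ≠ 0) :
    HasFDerivAt (fun u => ℓ u / ‖u‖ ^ 2)
      ((‖v‖ ^ 2)⁻¹ • ℓ - (2 * ℓ v / ‖v‖ ^ 4) • innerSL ℝ v) v := by
  have hv2 : ‖v‖ ^ 2 ≠ 0 := by positivity
  refine (ℓ.hasFDerivAt.mul
    ((hasFDerivAt_inv hv2).comp v (hasFDerivAt_id v).norm_sq)).congr_fderiv ?_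
  ext w
  simp only [id_eq, ContinuousLinearMap.comp_id, ContinuousLinearMap.comp_smul,
    Function.comp_apply, add_apply, smul_apply, ContinuousLinearMap.comp_apply, coe_innerSL_apply,
    ContinuousLinearMap.toSpanSingleton_apply, smul_eq_mul, mul_neg, smul_neg, nsmul_eq_mul,
    Nat.cast_ofNat, sub_apply]
  ring

theorem fderiv_Phi_single_one (ξ η : EuclideanSpace ℝ (Fin 2)) (hξη : ξ - η ≠ 0) (hη : η ≠ 0) :
    fderiv ℝ (Phi ξ) η (EuclideanSpace.single 1 1) =
      2 * η 0 * η 1 / ‖η‖ ^ 4 - 2 * (ξ 0 - η 0) * (ξ 1 - η 1) / ‖ξ - η‖ ^ 4 := by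
  have hf {v : EuclideanSpace ℝ (Fin 2)} (hv : v ≠ 0) :=
    hasFDerivAt_apply_div_norm_sq (EuclideanSpace.proj (0 : Fin 2)) hv
  -- `Phi ξ = const - f (ξ - ·) - f` with `f u = u 0 / ‖u‖ ^ 2`
  have hΦ : HasFDerivAt (Phi ξ) _ η := ((hasFDerivAt_const (ξ 0 / ‖ξ‖ ^ 2) η).sub
    ((hf hξη).comp η ((hasFDerivAt_const ξ η).sub (hasFDerivAt_id η)))).sub (hf hη)
  rw [hΦ.fderiv]
  simp only [Fin.isValue, PiLp.proj_apply, map_sub, zero_sub,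
    ContinuousLinearMap.comp_neg, ContinuousLinearMap.comp_id, neg_sub, sub_apply, smul_apply,
    ne_eq, zero_ne_one, not_false_eq_true, PiLp.single_eq_of_ne, smul_eq_mul, mul_zero,
    coe_innerSL_apply, EuclideanSpace.inner_single_right, Real.ringHom_apply, one_mul,
    sub_neg_eq_add]
  ring

theorem le_abs_partial_eta2_numerator {t η₁ η₂ ξ₁ ξ₂ r : ℝ} (ht : 0 ≤ t) (hr : 0 ≤ r)
    (hη : η₁ ^ 2 + η₂ ^ 2 = r ^ 2) (h₁ : |ξ₁ - 2 * η₁| ≤ r / 1000)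
    (h₂ : |ξ₂ - 2 * η₂| ≤ r / 1000) (hξ₁ : |ξ₁| ≤ |η₁| / 100) :
    |η₁| * r / 4 ≤ |2 * η₁ * η₂ * t - 2 * (ξ₁ - η₁) * (ξ₂ - η₂)| := by
  have hη₁ : |η₁| ≤ r / 1000 := by
    have : |2 * η₁| ≤ |ξ₁| + |ξ₁ - 2 * η₁| := by
      simpa using abs_sub ξ₁ (ξ₁ - 2 * η₁)
    rw [abs_mul, abs_two] at this
    linarith
  have hη₂ : r / 2 ≤ |η₂| := by
    have := sq_le_sq.mp (show (r / 2) ^ 2 ≤ η₂ ^ 2 by nlinarith [sq_abs η₁, abs_nonneg η₁])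
    rwa [abs_of_nonneg (by positivity)] at this
  have hη₂r : |η₂| ≤ r := by
    have := sq_le_sq.mp (show η₂ ^ 2 ≤ r ^ 2 by nlinarith [sq_nonneg η₁])
    rwa [abs_of_nonneg hr] at this
  have hξη₂ : |ξ₂ - η₂| ≤ 2 * r := by
    calc |ξ₂ - η₂| = |η₂ + (ξ₂ - 2 * η₂)| := by ring_nf
      _ ≤ |η₂| + |ξ₂ - 2 * η₂| := abs_add_le _ _
      _ ≤ 2 * r := by linarith
  have hlead : |η₁| * r ≤ |2 * η₁ * η₂ * (t + 1)| := by
    rw [abs_mul, abs_mul, abs_mul, abs_two, abs_of_nonneg (by linarith : 0 ≤ t + 1)]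
    nlinarith [mul_nonneg (mul_nonneg (abs_nonneg η₁) (abs_nonneg η₂)) ht,
      mul_le_mul_of_nonneg_left hη₂ (abs_nonneg η₁)]
  have hsmall₁ : |2 * η₁ * (ξ₂ - 2 * η₂)| ≤ 2 * |η₁| * (r / 1000) := by
    rw [abs_mul, abs_mul, abs_two]
    exact mul_le_mul_of_nonneg_left h₂ (by positivity)
  have hsmall₂ : |2 * ξ₁ * (ξ₂ - η₂)| ≤ 2 * (|η₁| / 100) * (2 * r) := by
    rw [abs_mul, abs_mul, abs_two]
    gcongr
  have hsplit : 2 * η₁ * η₂ * (t + 1) = (2 * η₁ * η₂ * t - 2 * (ξ₁ - η₁) * (ξ₂ - η₂))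
      - 2 * η₁ * (ξ₂ - 2 * η₂) + 2 * ξ₁ * (ξ₂ - η₂) := by ring
  have htri := abs_add_three (2 * η₁ * η₂ * t - 2 * (ξ₁ - η₁) * (ξ₂ - η₂))
    (-(2 * η₁ * (ξ₂ - 2 * η₂))) (2 * ξ₁ * (ξ₂ - η₂))
  rw [abs_neg, ← sub_eq_add_neg, ← hsplit] at htri
  linarith [mul_nonneg (abs_nonneg η₁) hr]

theorem le_abs_partial_eta2_formula {η₁ η₂ ξ₁ ξ₂ r a : ℝ} (ha : 0 < a) (hr : 0 ≤ r)
    (hη : η₁ ^ 2 + η₂ ^ 2 = r ^ 2) (h₁ : |ξ₁ - 2 * η₁| ≤ r / 1000)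
    (h₂ : |ξ₂ - 2 * η₂| ≤ r / 1000) (hξ₁ : |ξ₁| ≤ |η₁| / 100) :
    |η₁| * r / (4 * a ^ 4) ≤ |2 * η₁ * η₂ / r ^ 4 - 2 * (ξ₁ - η₁) * (ξ₂ - η₂) / a ^ 4| := by
  have hnum :=
    le_abs_partial_eta2_numerator (t := a ^ 4 / r ^ 4) (by positivity) hr hη h₁ h₂ hξ₁
  have hscale : 2 * η₁ * η₂ / r ^ 4 - 2 * (ξ₁ - η₁) * (ξ₂ - η₂) / a ^ 4
      = (2 * η₁ * η₂ * (a ^ 4 / r ^ 4) - 2 * (ξ₁ - η₁) * (ξ₂ - η₂)) / a ^ 4 := by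
    field_simp
  rw [hscale, abs_div, abs_of_pos (pow_pos ha 4), ← div_div]
  exact div_le_div_of_nonneg_right hnum (by positivity)

theorem partial_eta2_Phi_lower_bound_general (ξ η : EuclideanSpace ℝ (Fin 2))
    (h : ‖ξ - (2 : ℝ) • η‖ ≤ ‖η‖ / 1000) (h1 : |ξ 0| < |η 0| / 100) :
    |η 0| * ‖η‖ / (4 * ‖ξ - η‖ ^ 4) ≤
      |fderiv ℝ (fun η' => Phi ξ η') η (EuclideanSpace.single 1 1)| := by
  have hη0_pos : 0 < |η 0| := by linarith [abs_nonneg (ξ 0)]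
  have hη : η ≠ 0 := fun h0 => by simp [h0] at hη0_pos
  have hξη : ξ - η ≠ 0 := fun h0 => by
    rw [sub_eq_zero.mp h0] at h1
    linarith
  have hcoord (i : Fin 2) : |ξ i - 2 * η i| ≤ ‖η‖ / 1000 := by
    simpa using (PiLp.norm_apply_le (ξ - (2 : ℝ) • η) i).trans h
  have hnorm : η 0 ^ 2 + η 1 ^ 2 = ‖η‖ ^ 2 := by
    simp [EuclideanSpace.real_norm_sq_eq, Fin.sum_univ_two]
  rw [fderiv_Phi_single_one ξ η hξη hη]
  exact le_abs_partial_eta2_formula (norm_pos_iff.mpr hξη) (norm_nonneg η) hnorm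
    (hcoord 0) (hcoord 1) h1.le

/-- If η ≠ 0, |ξ−2η| ≤ |η|/1000 and |ξ₁| < |η₁|/100, then
|∂_{η₂}Φ(ξ,η)| ≥ |η₁|·|η|/(4|ξ−η|⁴). -/
theorem partial_eta2_Phi_lower_bound (ξ η : EuclideanSpace ℝ (Fin 2)) (hη : η ≠ 0)
    (h : ‖ξ - (2 : ℝ) • η‖ ≤ ‖η‖ / 1000) (h1 : |ξ 0| < |η 0| / 100) :
    |η 0| * ‖η‖ / (4 * ‖ξ - η‖ ^ 4) ≤
      |fderiv ℝ (fun η' => Phi ξ η') η (EuclideanSpace.single 1 1)| :=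
  partial_eta2_Phi_lower_bound_general ξ η h h1
end
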